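/- Let σ > 0, σ_Δ > 0, μ_Δ ∈ ℝ, η = σ_Δ²/(σ_Δ² + 2σ²) and ξ = |μ_Δ|/(√2·σ). If D is a random variable with density φ(d; μ_Δ, √(2σ² + σ_Δ²)) (the alternative model M₁), then the expectation of ln(BF₁₀)(D) = (1/2)( ln(1−η) − (1−η)((D − μ_Δ)/(√2σ))² + (D/(√2σ))² ) equals (1/2)·( ln(1 − η) + η/(1 − η) + ξ² ). -/

import Mathlib

open MeasureTheory

/-- The normal probability density function with mean `a` and standard deviation `b`. -/
noncomputable def gaussPdf (x a b : ℝ) : ℝ :=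
  (2 * Real.pi * b ^ 2) ^ (-(1 : ℝ) / 2) * Real.exp (-(x - a) ^ 2 / (2 * b ^ 2))

/-!
`ln BF₁₀(D)` is a quadratic polynomial in `D - μΔ`, so under the alternative model
`D ~ N(μΔ, 2σ² + σΔ²)` its expectation only involves the mean and the variance of `D`;
the `ξ²` term comes from expanding `(D / (√2 σ))²` around `μΔ`.
-/

open ProbabilityTheory NNReal

lemma gaussPdf_eq_gaussianPDFReal (x a b : ℝ) :
    gaussPdf x a b = gaussianPDFReal a (b ^ 2).toNNReal x := by
  rw [gaussPdf, gaussianPDFReal_def, Real.coe_toNNReal _ (sq_nonneg b), neg_div,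
    Real.rpow_neg (by positivity), Real.sqrt_eq_rpow, one_div]

lemma integral_mul_gaussPdf (f : ℝ → ℝ) (a : ℝ) {b : ℝ} (hb : b ≠ 0) :
    ∫ x, f x * gaussPdf x a b = ∫ x, f x ∂gaussianReal a (b ^ 2).toNNReal := by
  rw [integral_gaussianReal_eq_integral_smul (by positivity)]
  simp_rw [gaussPdf_eq_gaussianPDFReal, smul_eq_mul, mul_comm]

lemma integral_sub_mean_sq_gaussianReal (μ : ℝ) (v : ℝ≥0) :
    ∫ x, (x - μ) ^ 2 ∂gaussianReal μ v = v := by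
  simpa [variance_eq_integral measurable_id'.aemeasurable, integral_id_gaussianReal]
    using variance_fun_id_gaussianReal (μ := μ) (v := v)

lemma integral_quadratic_gaussianReal (μ : ℝ) (v : ℝ≥0) (p q r : ℝ) :
    ∫ x, p + q * (x - μ) + r * (x - μ) ^ 2 ∂gaussianReal μ v = p + r * v := by
  have hid : Integrable (fun x => x) (gaussianReal μ v) :=
    (memLp_id_gaussianReal 1).integrable le_rfl
  have hlin : Integrable (fun x => q * (x - μ)) (gaussianReal μ v) :=
    (hid.sub (integrable_const μ)).const_mul q
  have hsq : Integrable (fun x => r * (x - μ) ^ 2) (gaussianReal μ v) :=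
    ((memLp_id_gaussianReal 2).sub (memLp_const μ)).integrable_sq.const_mul r
  rw [integral_add ((integrable_const p).fun_add hlin) hsq, integral_add (integrable_const p) hlin,
    integral_const_mul, integral_const_mul, integral_sub_mean_sq_gaussianReal,
    integral_sub hid (integrable_const μ), integral_id_gaussianReal]
  simp

theorem stmt_6_general (σ σΔ : ℝ) (hσ : 0 < σ) (μΔ : ℝ)
    (η : ℝ) (hη : η = σΔ ^ 2 / (σΔ ^ 2 + 2 * σ ^ 2))
    (ξ : ℝ) (hξ : ξ = |μΔ| / (Real.sqrt 2 * σ))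
    (lnBF : ℝ → ℝ)
    (hlnBF : ∀ d, lnBF d = 1 / 2 * (Real.log (1 - η)
        - (1 - η) * ((d - μΔ) / (Real.sqrt 2 * σ)) ^ 2
        + (d / (Real.sqrt 2 * σ)) ^ 2)) :
    (∫ d : ℝ, lnBF d * gaussPdf d μΔ (Real.sqrt (2 * σ ^ 2 + σΔ ^ 2)))
      = 1 / 2 * (Real.log (1 - η) + η / (1 - η) + ξ ^ 2) := by
  have hσ2 : (Real.sqrt 2 * σ) ^ 2 = 2 * σ ^ 2 := by
    rw [mul_pow, Real.sq_sqrt zero_le_two]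
  have hξ2 : ξ ^ 2 = μΔ ^ 2 / (2 * σ ^ 2) := by rw [hξ, div_pow, hσ2, sq_abs]
  have h1η : 1 - η = 2 * σ ^ 2 / (σΔ ^ 2 + 2 * σ ^ 2) := by
    rw [hη]; field_simp; ring
  have hquad : ∀ d, lnBF d = (Real.log (1 - η) / 2 + ξ ^ 2 / 2) + μΔ / (2 * σ ^ 2) * (d - μΔ)
      + η / (4 * σ ^ 2) * (d - μΔ) ^ 2 := by
    intro d
    rw [hlnBF, div_pow, div_pow, hσ2, hξ2, h1η, hη]
    field_simp
    ring
  have hvar : ((Real.sqrt (2 * σ ^ 2 + σΔ ^ 2)) ^ 2).toNNReal = (2 * σ ^ 2 + σΔ ^ 2 : ℝ) := by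
    rw [Real.sq_sqrt (by positivity), Real.coe_toNNReal _ (by positivity)]
  rw [integral_mul_gaussPdf lnBF μΔ (by positivity)]
  simp_rw [hquad]
  rw [integral_quadratic_gaussianReal, hvar, h1η, hη]
  field_simp
  ring

theorem stmt_6 (σ σΔ : ℝ) (hσ : 0 < σ) (hσΔ : 0 < σΔ) (μΔ : ℝ)
    (η : ℝ) (hη : η = σΔ ^ 2 / (σΔ ^ 2 + 2 * σ ^ 2))
    (ξ : ℝ) (hξ : ξ = |μΔ| / (Real.sqrt 2 * σ))
    (lnBF : ℝ → ℝ)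
    (hlnBF : ∀ d, lnBF d = 1 / 2 * (Real.log (1 - η)
        - (1 - η) * ((d - μΔ) / (Real.sqrt 2 * σ)) ^ 2
        + (d / (Real.sqrt 2 * σ)) ^ 2)) :
    (∫ d : ℝ, lnBF d * gaussPdf d μΔ (Real.sqrt (2 * σ ^ 2 + σΔ ^ 2)))
      = 1 / 2 * (Real.log (1 - η) + η / (1 - η) + ξ ^ 2) :=
  stmt_6_general σ σΔ hσ μΔ η hη ξ hξ lnBF hlnBF
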